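/- arXiv:2410.04583 — 7 statements merged into one kernel-verified Lean document; each statement's English description precedes it below -/
import Mathlib

section
/- Fix ε > 0 and set λ := 1 + ε. For each integer n ≥ 1 let Pₙ ⊆ ℂ and let 0 < rₙ ≤ 1 satisfy the (c,α)-Diophantine condition rₙ ≥ c/n^α for some c > 0, α > 0. Let V ⊆ ℂ be open, and suppose fₙ is holomorphic on an open set containing Vₙ(r) := V \ ⋃_{p∈Pₙ} D(p, rₙ) with sup_{z ∈ Vₙ(r)} |fₙ(z)| ≤ A·ρⁿ for constants A > 0 and 0 < ρ < 1 (f is meandromorphic). Let V' ⊆ V be open with δ(V',V) ≥ ε. Then for every z₀ ∈ ⋂_{n≥1} V'ₙ(λr) and every integer m ≥ 0, the series Σ_{n≥1} fₙ^{(m)}(z₀) converges absolutely and |Σ_{n≥1} fₙ^{(m)}(z₀)| ≤ (A·m!/(c^m·ε^m)) · Σ_{n≥1} n^{α m} ρⁿ, the last series being finite. -/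
open Metric Set

/-- The Huygens distance `δ(U,V)`. -/
noncomputable def huygens (U V : Set ℂ) : ℝ :=
  sSup {ρ : ℝ | 0 < ρ ∧ ∀ z ∈ U, Metric.ball z ρ ⊆ V}

/-- The `n`-th sheet `Vₙ(r) = V \ ⋃_{p ∈ Pₙ} D(p, rₙ)` of the `r`-perforation.
(The index `n : ℕ` represents the sheet `n+1` of the paper.) -/
def perfSheet (V : Set ℂ) (P : ℕ → Set ℂ) (r : ℕ → ℝ) (n : ℕ) : Set ℂ :=
  V \ ⋃ p ∈ P n, Metric.ball p (r n)

/-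
Around a point `z₀` of the residual set, the closed disc of radius `ε rₙ` stays in `V` (by the
Huygens condition) and at distance `≥ rₙ` from every pole of `Pₙ` (since `z₀` avoids the discs of
radius `(1 + ε) rₙ`), so it lies in the `n`-th sheet. Cauchy's estimate on that disc and the
Diophantine condition give `|fₙ^{(m)}(z₀)| ≤ A m! ρⁿ / (ε rₙ)^m ≤ (A m! / (c^m ε^m)) n^{αm} ρⁿ`,
a summable majorant.
-/

theorem thickening_subset_of_le_huygens {U V : Set ℂ} {ε : ℝ} (h : ε ≤ huygens U V) :
    thickening ε U ⊆ V := by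
  intro w hw
  obtain ⟨z, hzU, hwz⟩ := mem_thickening_iff.1 hw
  set S : Set ℝ := {ρ : ℝ | 0 < ρ ∧ ∀ z ∈ U, ball z ρ ⊆ V}
  have hlt : dist w z < sSup S := hwz.trans_le h
  have hS : S.Nonempty := by
    by_contra hS
    rw [Set.not_nonempty_iff_eq_empty.1 hS, Real.sSup_empty] at hlt
    exact (dist_nonneg.trans_lt hlt).false
  obtain ⟨ρ, ⟨-, hρV⟩, hwρ⟩ := exists_lt_of_lt_csSup hS hlt
  exact hρV z hzU (mem_ball.2 hwρ)

theorem closedBall_subset_of_le_huygens {U V : Set ℂ} {ε : ℝ} (hε : 0 < ε) (hU : IsOpen U)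
    (h : ε ≤ huygens U V) {z : ℂ} (hz : z ∈ U) : closedBall z ε ⊆ V := by
  obtain ⟨s, hs, hsU⟩ := Metric.isOpen_iff.1 hU z hz
  calc closedBall z ε ⊆ ball z (ε + s) := closedBall_subset_ball (by linarith)
    _ = thickening ε (ball z s) := (thickening_ball hε hs z).symm
    _ ⊆ thickening ε U := thickening_subset_of_subset ε hsU
    _ ⊆ V := thickening_subset_of_le_huygens h

theorem closedBall_subset_perfSheet {V V' : Set ℂ} {P : ℕ → Set ℂ} {r : ℕ → ℝ} {ε : ℝ} {n : ℕ}
    {z : ℂ} (hε : 0 ≤ ε) (hr : r n ≤ 1) (hV : closedBall z ε ⊆ V)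
    (hz : z ∈ perfSheet V' P (fun i => (1 + ε) * r i) n) :
    closedBall z (ε * r n) ⊆ perfSheet V P r n := by
  intro w hw
  rw [mem_closedBall] at hw
  refine ⟨hV (mem_closedBall.2 (hw.trans (mul_le_of_le_one_right hε hr))), ?_⟩
  simp only [mem_iUnion, mem_ball, not_exists]
  intro p hp hwp
  apply hz.2
  simp only [mem_iUnion, mem_ball]
  refine ⟨p, hp, ?_⟩
  linarith [dist_triangle z w p, dist_comm z w]

theorem inv_mul_pow_le_of_div_rpow_le {c x r ε α : ℝ} (hc : 0 < c) (hx : 0 < x) (hε : 0 < ε)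
    (h : c / x ^ α ≤ r) (m : ℕ) : ((ε * r) ^ m)⁻¹ ≤ x ^ (α * m) / (c ^ m * ε ^ m) := by
  calc ((ε * r) ^ m)⁻¹ ≤ ((ε * (c / x ^ α)) ^ m)⁻¹ := by gcongr
    _ = x ^ (α * m) / (c ^ m * ε ^ m) := by
      rw [Real.rpow_mul_natCast hx.le, mul_div_assoc', div_pow, inv_div, mul_pow, mul_comm (ε ^ m)]

theorem summable_add_one_rpow_mul_pow_succ (s : ℝ) {ρ : ℝ} (hρ0 : 0 ≤ ρ) (hρ1 : ρ < 1) :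
    Summable fun n : ℕ => ((n : ℝ) + 1) ^ s * ρ ^ (n + 1) := by
  set k := ⌈s⌉₊
  have hgeom : Summable fun n : ℕ => ((n : ℝ) + 1) ^ k * ρ ^ (n + 1) := by
    have := summable_pow_mul_geometric_of_norm_lt_one k
      (by rwa [Real.norm_eq_abs, abs_of_nonneg hρ0] : ‖ρ‖ < 1)
    simpa using (summable_nat_add_iff 1).2 this
  refine hgeom.of_nonneg_of_le (fun n => by positivity) (fun n => ?_)
  gcongr
  calc ((n : ℝ) + 1) ^ s ≤ ((n : ℝ) + 1) ^ (k : ℝ) :=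
        Real.rpow_le_rpow_of_exponent_le (by linarith [n.cast_nonneg (α := ℝ)]) (Nat.le_ceil s)
    _ = ((n : ℝ) + 1) ^ k := Real.rpow_natCast _ k

theorem meandromorphic_derivative_bound_general (ε : ℝ) (hε : 0 < ε) (lam : ℝ) (hlam : lam = 1 + ε)
    (P : ℕ → Set ℂ) (r : ℕ → ℝ) (hr0 : ∀ n, 0 < r n) (hr1 : ∀ n, r n ≤ 1)
    (c α : ℝ) (hc : 0 < c)
    (hdioph : ∀ n : ℕ, c / ((n : ℝ) + 1) ^ α ≤ r n)
    (V : Set ℂ) (f : ℕ → ℂ → ℂ)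
    (hf : ∀ n, ∃ O : Set ℂ, IsOpen O ∧ perfSheet V P r n ⊆ O ∧ DifferentiableOn ℂ (f n) O)
    (A ρ : ℝ) (hA : 0 < A) (hρ0 : 0 < ρ) (hρ1 : ρ < 1)
    (hbound : ∀ n, ∀ z ∈ perfSheet V P r n, ‖f n z‖ ≤ A * ρ ^ (n + 1))
    (V' : Set ℂ) (hV' : IsOpen V') (hδ : ε ≤ huygens V' V)
    (z₀ : ℂ) (hz₀ : z₀ ∈ ⋂ n, perfSheet V' P (fun i => lam * r i) n) (m : ℕ) :
    (Summable fun n => ‖iteratedDeriv m (f n) z₀‖) ∧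
    (Summable fun n : ℕ => ((n : ℝ) + 1) ^ (α * (m : ℝ)) * ρ ^ (n + 1)) ∧
    ‖∑' n, iteratedDeriv m (f n) z₀‖ ≤
      A * (Nat.factorial m : ℝ) / (c ^ m * ε ^ m) *
        ∑' n : ℕ, ((n : ℝ) + 1) ^ (α * (m : ℝ)) * ρ ^ (n + 1) := by
  subst hlam
  have hz := mem_iInter.1 hz₀
  have hV : closedBall z₀ ε ⊆ V := closedBall_subset_of_le_huygens hε hV' hδ (hz 0).1
  set C := A * (Nat.factorial m : ℝ) / (c ^ m * ε ^ m)
  set g := fun n : ℕ => ((n : ℝ) + 1) ^ (α * (m : ℝ)) * ρ ^ (n + 1)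
  have hterm : ∀ n, ‖iteratedDeriv m (f n) z₀‖ ≤ C * g n := by
    intro n
    have hball := closedBall_subset_perfSheet hε.le (hr1 n) hV (hz n)
    obtain ⟨O, -, hO, hfO⟩ := hf n
    calc ‖iteratedDeriv m (f n) z₀‖
        ≤ m.factorial * (A * ρ ^ (n + 1)) * ((ε * r n) ^ m)⁻¹ :=
          Complex.norm_iteratedDeriv_le_of_forall_mem_sphere_norm_le m (mul_pos hε (hr0 n))
            (hfO.diffContOnCl_ball (hball.trans hO))
            (fun w hw => hbound n w (hball (sphere_subset_closedBall hw)))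
      _ ≤ m.factorial * (A * ρ ^ (n + 1)) * (((n : ℝ) + 1) ^ (α * m) / (c ^ m * ε ^ m)) := by
          gcongr
          exact inv_mul_pow_le_of_div_rpow_le hc (by positivity) hε (hdioph n) m
      _ = C * g n := by ring
  have hg := summable_add_one_rpow_mul_pow_succ (α * m) hρ0.le hρ1
  refine ⟨(hg.mul_left C).of_nonneg_of_le (fun n => norm_nonneg _) hterm, hg, ?_⟩
  exact tsum_of_norm_bounded (hg.hasSum.mul_left C) hterm

/-- For a meandromorphic sequence (`|fₙ| ≤ A ρⁿ` on the sheets) over a `(c,α)`-Diophantine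
perforation (`rₙ ≥ c/n^α`), with `δ(V',V) ≥ ε`, `λ = 1+ε`, at every point `z₀` of the
residual set of the `λr`-perforation of `V'` and every `m ≥ 0`, the series
`Σₙ fₙ^{(m)}(z₀)` converges absolutely and
`|Σₙ fₙ^{(m)}(z₀)| ≤ (A m!/(c^m ε^m)) Σₙ n^{αm} ρⁿ`, the latter series being finite. -/
theorem meandromorphic_derivative_bound (ε : ℝ) (hε : 0 < ε) (lam : ℝ) (hlam : lam = 1 + ε)
    (P : ℕ → Set ℂ) (r : ℕ → ℝ) (hr0 : ∀ n, 0 < r n) (hr1 : ∀ n, r n ≤ 1)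
    (c α : ℝ) (hc : 0 < c) (hα : 0 < α)
    (hdioph : ∀ n : ℕ, c / ((n : ℝ) + 1) ^ α ≤ r n)
    (V : Set ℂ) (hV : IsOpen V) (f : ℕ → ℂ → ℂ)
    (hf : ∀ n, ∃ O : Set ℂ, IsOpen O ∧ perfSheet V P r n ⊆ O ∧ DifferentiableOn ℂ (f n) O)
    (A ρ : ℝ) (hA : 0 < A) (hρ0 : 0 < ρ) (hρ1 : ρ < 1)
    (hbound : ∀ n, ∀ z ∈ perfSheet V P r n, ‖f n z‖ ≤ A * ρ ^ (n + 1))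
    (V' : Set ℂ) (hV' : IsOpen V') (hV'V : V' ⊆ V) (hδ : ε ≤ huygens V' V)
    (z₀ : ℂ) (hz₀ : z₀ ∈ ⋂ n, perfSheet V' P (fun i => lam * r i) n) (m : ℕ) :
    (Summable fun n => ‖iteratedDeriv m (f n) z₀‖) ∧
    (Summable fun n : ℕ => ((n : ℝ) + 1) ^ (α * (m : ℝ)) * ρ ^ (n + 1)) ∧
    ‖∑' n, iteratedDeriv m (f n) z₀‖ ≤
      A * (Nat.factorial m : ℝ) / (c ^ m * ε ^ m) *
        ∑' n : ℕ, ((n : ℝ) + 1) ^ (α * (m : ℝ)) * ρ ^ (n + 1) :=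
  meandromorphic_derivative_bound_general ε hε lam hlam P r hr0 hr1 c α hc hdioph V f hf A ρ hA hρ0
    hρ1 hbound V' hV' hδ z₀ hz₀ m
end

section
/- Fix ε > 0 and set λ := 1 + ε. For each integer n ≥ 1 let Pₙ ⊆ ℂ and let 0 < rₙ ≤ 1 satisfy rₙ ≥ c/n^α for some c > 0, α > 0. Let V ⊆ ℂ be open and suppose fₙ is holomorphic on an open set containing Vₙ(r) := V \ ⋃_{p∈Pₙ} D(p, rₙ) with sup_{z ∈ Vₙ(r)} |fₙ(z)| ≤ A·ρⁿ for constants A > 0 and 0 < ρ < 1. Let V' ⊆ V be open with δ(V',V) ≥ ε and let z₀ ∈ ⋂_{n≥1} V'ₙ(λr). Then the sum function is of Gevrey class α at z₀: there exists K > 0 such that for every integer m ≥ 1, |Σ_{n≥1} fₙ^{(m)}(z₀)| ≤ K^{m+1} · m! · m^{α m}. -/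
/-!
On the closed disc of radius `Rₙ = ε rₙ / 2` about `z₀`, which stays inside `V` and away from the
poles of the `n`-th sheet, Cauchy's estimate gives `|fₙ^{(m)}(z₀)| ≤ m! A ρⁿ⁺¹ Rₙ⁻ᵐ`, and the
Diophantine condition turns `Rₙ⁻ᵐ` into `(2/(εc))ᵐ (n+1)^{αm}`. Writing `ρ = σ²`, the polynomial
factor is absorbed by one `σⁿ⁺¹` via `x^β σˣ ≤ (β / -log σ)^β`, which produces the Gevrey
factor `m^{αm}`, while the other `σⁿ⁺¹` sums to a geometric series.
-/

open Metric Set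

lemma closedBall_subset_of_lt_huygens {U V : Set ℂ} {z : ℂ} {R : ℝ} (hz : z ∈ U)
    (hR : R < huygens U V) : closedBall z R ⊆ V := by
  rcases Set.eq_empty_or_nonempty {ρ : ℝ | 0 < ρ ∧ ∀ z ∈ U, ball z ρ ⊆ V} with hS | hS
  · rw [huygens, hS, Real.sSup_empty] at hR
    simp [closedBall_eq_empty.mpr hR]
  · obtain ⟨s, ⟨-, hs⟩, hRs⟩ := exists_lt_of_lt_csSup hS hR
    exact (closedBall_subset_ball hRs).trans (hs z hz)

lemma closedBall_subset_perfSheet_s4 {V' V : Set ℂ} {P : ℕ → Set ℂ} {r r' : ℕ → ℝ} {n : ℕ}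
    {z₀ : ℂ} {R : ℝ} (hz₀ : z₀ ∈ perfSheet V' P r' n) (hV : closedBall z₀ R ⊆ V)
    (hR : R + r n ≤ r' n) : closedBall z₀ R ⊆ perfSheet V P r n := by
  intro z hz
  refine ⟨hV hz, ?_⟩
  simp only [mem_iUnion, mem_ball, exists_prop, not_exists, not_and]
  intro p hp hzp
  refine hz₀.2 (mem_biUnion hp (mem_ball.mpr ?_))
  calc dist z₀ p ≤ dist z₀ z + dist z p := dist_triangle _ _ _
    _ < R + r n := add_lt_add_of_le_of_lt (mem_closedBall'.mp hz) hzp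
    _ ≤ r' n := hR

lemma closedBall_half_subset_perfSheet {V' V : Set ℂ} {P : ℕ → Set ℂ} {r : ℕ → ℝ} {n : ℕ}
    {z₀ : ℂ} {ε : ℝ} (hε : 0 < ε) (hr0 : 0 < r n) (hr1 : r n ≤ 1) (hδ : ε ≤ huygens V' V)
    (hz₀ : z₀ ∈ perfSheet V' P (fun i => (1 + ε) * r i) n) :
    closedBall z₀ (ε * r n / 2) ⊆ perfSheet V P r n := by
  refine closedBall_subset_perfSheet_s4 hz₀ (closedBall_subset_of_lt_huygens hz₀.1 ?_) ?_
  · nlinarith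
  · nlinarith

lemma norm_iteratedDeriv_le_of_closedBall_subset {F : Type*} [NormedAddCommGroup F]
    [NormedSpace ℂ F] [CompleteSpace F] {f : ℂ → F} {O : Set ℂ} {z : ℂ} {R M : ℝ}
    (hf : DifferentiableOn ℂ f O) (hR : 0 < R) (hO : closedBall z R ⊆ O)
    (hM : ∀ w ∈ closedBall z R, ‖f w‖ ≤ M) (m : ℕ) :
    ‖iteratedDeriv m f z‖ ≤ m.factorial * M / R ^ m :=
  Complex.norm_iteratedDeriv_le_of_forall_mem_sphere_norm_le m hR (hf.diffContOnCl_ball hO)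
    fun w hw ↦ hM w (sphere_subset_closedBall hw)

lemma rpow_le_div_rpow_mul_exp {x β L : ℝ} (hx : 0 ≤ x) (hβ : 0 < β) (hL : 0 < L) :
    x ^ β ≤ (β / L) ^ β * Real.exp (L * x) := by
  have hLx : 0 ≤ L * x / β := by positivity
  calc x ^ β = (β / L) ^ β * (L * x / β) ^ β := by
        rw [← Real.mul_rpow (by positivity) hLx]
        congr 1
        field_simp
    _ ≤ (β / L) ^ β * Real.exp (L * x / β) ^ β := by
        gcongr
        linarith [Real.add_one_le_exp (L * x / β)]
    _ = (β / L) ^ β * Real.exp (L * x) := by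
        rw [← Real.exp_mul, div_mul_cancel₀ _ hβ.ne']

lemma natCast_rpow_mul_pow_le {σ β : ℝ} (hσ0 : 0 < σ) (hσ1 : σ < 1) (hβ : 0 < β) (k : ℕ) :
    (k : ℝ) ^ β * σ ^ k ≤ (β / -Real.log σ) ^ β := by
  have hL : 0 < -Real.log σ := neg_pos.mpr (Real.log_neg hσ0 hσ1)
  have hσk : σ ^ k * Real.exp (-Real.log σ * k) = 1 := by
    rw [← Real.exp_log hσ0, ← Real.exp_nat_mul, ← Real.exp_add, Real.log_exp]
    simp [mul_comm]
  calc (k : ℝ) ^ β * σ ^ k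
      ≤ (β / -Real.log σ) ^ β * Real.exp (-Real.log σ * k) * σ ^ k := by
        gcongr
        exact rpow_le_div_rpow_mul_exp k.cast_nonneg hβ hL
    _ = (β / -Real.log σ) ^ β := by rw [mul_assoc, mul_comm (Real.exp _), hσk, mul_one]

lemma norm_tsum_le_of_norm_le_rpow_mul_pow {E : Type*} [NormedAddCommGroup E]
    {g : ℕ → E} {a ρ β : ℝ} (hρ0 : 0 < ρ) (hρ1 : ρ < 1) (hβ : 0 < β) (ha : 0 ≤ a)
    (hg : ∀ n, ‖g n‖ ≤ a * (((n : ℝ) + 1) ^ β * ρ ^ (n + 1))) :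
    ‖∑' n, g n‖ ≤ a * ((2 * β / -Real.log ρ) ^ β / (1 - √ρ)) := by
  have hlogρ : 0 < -Real.log ρ := neg_pos.mpr (Real.log_neg hρ0 hρ1)
  set σ := √ρ
  have hσ0 : 0 < σ := Real.sqrt_pos.mpr hρ0
  have hσ1 : σ < 1 := (Real.sqrt_lt' one_pos).mpr (by simpa using hρ1)
  have hlogσ : β / -Real.log σ = 2 * β / -Real.log ρ := by
    rw [Real.log_sqrt hρ0.le]
    field_simp
  have hmajor : ∀ n, ‖g n‖ ≤ a * (2 * β / -Real.log ρ) ^ β * σ * σ ^ n := fun n ↦ by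
    refine (hg n).trans ?_
    have hpoly := natCast_rpow_mul_pow_le hσ0 hσ1 hβ (n + 1)
    rw [hlogσ, Nat.cast_succ] at hpoly
    calc a * (((n : ℝ) + 1) ^ β * ρ ^ (n + 1))
        = a * (((n : ℝ) + 1) ^ β * σ ^ (n + 1)) * σ ^ (n + 1) := by
          rw [← Real.sq_sqrt hρ0.le, ← pow_mul, mul_comm 2, pow_mul, sq]
          ring
      _ ≤ a * (2 * β / -Real.log ρ) ^ β * σ ^ (n + 1) := by gcongr
      _ = a * (2 * β / -Real.log ρ) ^ β * σ * σ ^ n := by ring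
  have hsum := (summable_geometric_of_lt_one hσ0.le hσ1).mul_left
    (a * (2 * β / -Real.log ρ) ^ β * σ)
  have hnorm : Summable fun n ↦ ‖g n‖ := hsum.of_nonneg_of_le (fun _ ↦ norm_nonneg _) hmajor
  calc ‖∑' n, g n‖ ≤ ∑' n, ‖g n‖ := norm_tsum_le_tsum_norm hnorm
    _ ≤ ∑' n, a * (2 * β / -Real.log ρ) ^ β * σ * σ ^ n := hnorm.tsum_le_tsum hmajor hsum
    _ = a * ((2 * β / -Real.log ρ) ^ β * σ / (1 - σ)) := by
        rw [tsum_mul_left, tsum_geometric_of_lt_one hσ0.le hσ1]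
        ring
    _ ≤ a * ((2 * β / -Real.log ρ) ^ β / (1 - σ)) := by
        have hX : 0 ≤ (2 * β / -Real.log ρ) ^ β := Real.rpow_nonneg (by positivity) β
        have : 0 < 1 - σ := by linarith
        gcongr
        exact mul_le_of_le_one_right hX hσ1.le

lemma mul_pow_le_max_pow_succ {a b : ℝ} (ha : 0 ≤ a) (hb : 0 ≤ b) (m : ℕ) :
    a * b ^ m ≤ max a b ^ (m + 1) := by
  rw [pow_succ']
  gcongr
  exacts [le_max_left _ _, le_max_right _ _]
lemma inv_pow_le_of_div_rpow_le {c r x α ε : ℝ} (hc : 0 < c) (hε : 0 < ε) (hx : 0 < x)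
    (h : c / x ^ α ≤ r) (m : ℕ) : ((ε * r / 2) ^ m)⁻¹ ≤ (2 / (ε * c)) ^ m * x ^ (α * m) := by
  have hxα : 0 < x ^ α := Real.rpow_pos_of_pos hx α
  have hR : ε * c / (2 * x ^ α) ≤ ε * r / 2 := by
    rw [div_le_iff₀ hxα] at h
    rw [div_le_iff₀ (by positivity)]
    nlinarith
  calc ((ε * r / 2) ^ m)⁻¹ ≤ ((ε * c / (2 * x ^ α)) ^ m)⁻¹ := by gcongr
    _ = (2 / (ε * c)) ^ m * x ^ (α * m) := by
        rw [Real.rpow_mul hx.le, Real.rpow_natCast, ← inv_pow, ← mul_pow]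
        congr 1
        field_simp

lemma norm_iteratedDeriv_le_of_div_rpow_le {F : Type*} [NormedAddCommGroup F]
    [NormedSpace ℂ F] [CompleteSpace F] {f : ℂ → F} {O : Set ℂ} {z : ℂ} {ε c r x α M : ℝ}
    (hf : DifferentiableOn ℂ f O) (hε : 0 < ε) (hc : 0 < c) (hr : 0 < r) (hx : 0 < x)
    (hcr : c / x ^ α ≤ r) (hO : closedBall z (ε * r / 2) ⊆ O)
    (hM : ∀ w ∈ closedBall z (ε * r / 2), ‖f w‖ ≤ M) (m : ℕ) :
    ‖iteratedDeriv m f z‖ ≤ m.factorial * M * ((2 / (ε * c)) ^ m * x ^ (α * m)) := by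
  have hM0 : 0 ≤ M := (norm_nonneg _).trans (hM z (mem_closedBall_self (by positivity)))
  calc ‖iteratedDeriv m f z‖ ≤ m.factorial * M / (ε * r / 2) ^ m :=
        norm_iteratedDeriv_le_of_closedBall_subset hf (by positivity) hO hM m
    _ = m.factorial * M * ((ε * r / 2) ^ m)⁻¹ := div_eq_mul_inv _ _
    _ ≤ m.factorial * M * ((2 / (ε * c)) ^ m * x ^ (α * m)) := by
        gcongr
        exact inv_pow_le_of_div_rpow_le hc hε hx hcr m

lemma mul_rpow_mul_natCast {a x : ℝ} (ha : 0 ≤ a) (hx : 0 ≤ x) (α : ℝ) (m : ℕ) :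
    (a * x) ^ (α * m) = (a ^ α) ^ m * x ^ (α * m) := by
  rw [Real.mul_rpow ha hx, Real.rpow_mul ha, Real.rpow_natCast]

theorem gevrey_lemma_general (ε : ℝ) (hε : 0 < ε) (lam : ℝ) (hlam : lam = 1 + ε)
    (P : ℕ → Set ℂ) (r : ℕ → ℝ) (hr0 : ∀ n, 0 < r n) (hr1 : ∀ n, r n ≤ 1)
    (c α : ℝ) (hc : 0 < c) (hα : 0 < α)
    (hdioph : ∀ n : ℕ, c / ((n : ℝ) + 1) ^ α ≤ r n)
    (V : Set ℂ) (f : ℕ → ℂ → ℂ)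
    (hf : ∀ n, ∃ O : Set ℂ, IsOpen O ∧ perfSheet V P r n ⊆ O ∧ DifferentiableOn ℂ (f n) O)
    (A ρ : ℝ) (hA : 0 < A) (hρ0 : 0 < ρ) (hρ1 : ρ < 1)
    (hbound : ∀ n, ∀ z ∈ perfSheet V P r n, ‖f n z‖ ≤ A * ρ ^ (n + 1))
    (V' : Set ℂ) (hδ : ε ≤ huygens V' V)
    (z₀ : ℂ) (hz₀ : z₀ ∈ ⋂ n, perfSheet V' P (fun i => lam * r i) n) :
    ∃ K : ℝ, 0 < K ∧ ∀ m : ℕ, 1 ≤ m →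
      ‖∑' n, iteratedDeriv m (f n) z₀‖ ≤
        K ^ (m + 1) * (Nat.factorial m : ℝ) * (m : ℝ) ^ (α * (m : ℝ)) := by
  subst hlam
  have hdisc (n : ℕ) : closedBall z₀ (ε * r n / 2) ⊆ perfSheet V P r n :=
    closedBall_half_subset_perfSheet hε (hr0 n) (hr1 n) hδ (mem_iInter.mp hz₀ n)
  have hσ1 : √ρ < 1 := (Real.sqrt_lt' one_pos).mpr (by simpa using hρ1)
  set C := 2 / (ε * c)
  set B := (2 * α / -Real.log ρ) ^ α
  refine ⟨max (A / (1 - √ρ)) (C * B), lt_max_of_lt_left (by bound), fun m hm ↦ ?_⟩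
  have hterm (n : ℕ) : ‖iteratedDeriv m (f n) z₀‖ ≤
      (m.factorial * A * C ^ m) * (((n : ℝ) + 1) ^ (α * m) * ρ ^ (n + 1)) := by
    obtain ⟨O, -, hO, hfO⟩ := hf n
    refine (norm_iteratedDeriv_le_of_div_rpow_le hfO hε hc (hr0 n) (by positivity) (hdioph n)
      ((hdisc n).trans hO) (fun z hz ↦ hbound n z (hdisc n hz)) m).trans_eq ?_
    ring
  have hβ : 0 < α * m := mul_pos hα (by exact_mod_cast hm)
  have hbase : 0 ≤ 2 * α / -Real.log ρ := by
    have := Real.log_neg hρ0 hρ1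
    bound
  calc ‖∑' n, iteratedDeriv m (f n) z₀‖
      ≤ (m.factorial * A * C ^ m) * ((2 * (α * m) / -Real.log ρ) ^ (α * m) / (1 - √ρ)) :=
        norm_tsum_le_of_norm_le_rpow_mul_pow hρ0 hρ1 hβ (by positivity) hterm
    _ = A / (1 - √ρ) * (C * B) ^ m * (m.factorial * (m : ℝ) ^ (α * m)) := by
        rw [show 2 * (α * m) / -Real.log ρ = 2 * α / -Real.log ρ * m by ring,
          mul_rpow_mul_natCast hbase m.cast_nonneg]
        ring
    _ ≤ _ := by
        rw [mul_assoc _ (m.factorial : ℝ)]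
        gcongr
        exact mul_pow_le_max_pow_succ (by bound) (by positivity) m

/-- The Gevrey lemma: for a meandromorphic sequence (`|fₙ| ≤ A ρⁿ`) over an
`(c,α)`-Diophantine perforation (`rₙ ≥ c/n^α`) with `δ(V',V) ≥ ε`, `λ = 1+ε`, the sum
function is of Gevrey class `α` at every point `z₀` of the residual set of the
`λr`-perforation of `V'`: there is `K > 0` with
`|Σₙ fₙ^{(m)}(z₀)| ≤ K^{m+1} m! m^{αm}` for all `m ≥ 1`. -/
theorem gevrey_lemma (ε : ℝ) (hε : 0 < ε) (lam : ℝ) (hlam : lam = 1 + ε)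
    (P : ℕ → Set ℂ) (r : ℕ → ℝ) (hr0 : ∀ n, 0 < r n) (hr1 : ∀ n, r n ≤ 1)
    (c α : ℝ) (hc : 0 < c) (hα : 0 < α)
    (hdioph : ∀ n : ℕ, c / ((n : ℝ) + 1) ^ α ≤ r n)
    (V : Set ℂ) (hV : IsOpen V) (f : ℕ → ℂ → ℂ)
    (hf : ∀ n, ∃ O : Set ℂ, IsOpen O ∧ perfSheet V P r n ⊆ O ∧ DifferentiableOn ℂ (f n) O)
    (A ρ : ℝ) (hA : 0 < A) (hρ0 : 0 < ρ) (hρ1 : ρ < 1)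
    (hbound : ∀ n, ∀ z ∈ perfSheet V P r n, ‖f n z‖ ≤ A * ρ ^ (n + 1))
    (V' : Set ℂ) (hV' : IsOpen V') (hV'V : V' ⊆ V) (hδ : ε ≤ huygens V' V)
    (z₀ : ℂ) (hz₀ : z₀ ∈ ⋂ n, perfSheet V' P (fun i => lam * r i) n) :
    ∃ K : ℝ, 0 < K ∧ ∀ m : ℕ, 1 ≤ m →
      ‖∑' n, iteratedDeriv m (f n) z₀‖ ≤
        K ^ (m + 1) * (Nat.factorial m : ℝ) * (m : ℝ) ^ (α * (m : ℝ)) :=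
  gevrey_lemma_general ε hε lam hlam P r hr0 hr1 c α hc hα hdioph V f hf A ρ hA hρ0 hρ1 hbound V' hδ
    z₀ hz₀
end

section
/- Let I ⊆ ℝ be an open interval of length strictly greater than π and let Σ := {t·e^{iφ} : 0 < t < 1, φ ∈ I} be the corresponding open sector of the unit disc. If f is holomorphic on Σ and there exist constants A, B > 0 with |f(z)| ≤ A·exp(−B/|z|) for all z ∈ Σ, then f is identically zero on Σ (Watson's lemma). -/
open Complex Set Filter Topology Asymptotics
open scoped Real

/-!
In the coordinate `ζ = log z` the sector is the half-strip `Re ζ < 0, a < Im ζ < b` and the bound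
reads `‖f (exp ζ)‖ ≤ A exp (-B exp (-Re ζ))`. With `q = (b - a) / π > 1`, the map
`w ↦ i (a + b) / 2 - q log (w + 2)` sends the closed right half-plane into this half-strip, and the
pulled-back function is bounded there and `O(exp (-B ‖w‖ ^ q))`. As `q > 1` this is
superexponential decay along the positive reals, so by Phragmén–Lindelöf the pullback vanishes;
the identity theorem on the convex half-strip then gives `f = 0`.
-/

lemma Convex.reProdIm {s t : Set ℝ} (hs : Convex ℝ s) (ht : Convex ℝ t) :
    Convex ℝ (s ×ℂ t) := by
  rw [← hs.convexHull_eq, ← ht.convexHull_eq, ← convexHull_reProdIm]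
  exact convex_convexHull ℝ _

lemma setOf_polar_mem_Ioo_eq_image_exp (a b : ℝ) :
    {z : ℂ | ∃ t φ : ℝ, 0 < t ∧ t < 1 ∧ φ ∈ Ioo a b ∧ z = (t : ℂ) * exp (φ * I)} =
      exp '' (Iio 0 ×ℂ Ioo a b) := by
  ext z
  constructor
  · rintro ⟨t, φ, ht₀, ht₁, hφ, rfl⟩
    refine ⟨Real.log t + φ * I, ⟨?_, ?_⟩, ?_⟩
    · simpa using Real.log_neg ht₀ ht₁
    · simpa using hφ
    · rw [exp_add, ← ofReal_exp, Real.exp_log ht₀]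
  · rintro ⟨ζ, ⟨hre, him⟩, rfl⟩
    refine ⟨Real.exp ζ.re, ζ.im, Real.exp_pos _, Real.exp_lt_one_iff.2 hre, him, ?_⟩
    rw [ofReal_exp, ← exp_add, re_add_im]

lemma Real.tendsto_mul_sub_mul_rpow_atTop_atBot (n : ℝ) {c q : ℝ} (hc : 0 < c) (hq : 1 < q) :
    Tendsto (fun x : ℝ => n * x - c * x ^ q) atTop atBot := by
  have hlin : Tendsto (fun x : ℝ => n - c * x ^ (q - 1)) atTop atBot := by
    simpa [sub_eq_add_neg] using tendsto_atBot_add_const_left _ n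
      (tendsto_neg_atTop_atBot.comp ((tendsto_rpow_atTop (sub_pos.2 hq)).const_mul_atTop hc))
  refine (tendsto_id.atTop_mul_atBot₀ hlin).congr' ?_
  filter_upwards [eventually_gt_atTop 0] with x hx
  rw [id, Real.rpow_sub_one hx.ne']
  field_simp

lemma Real.superpolynomialDecay_exp_neg_mul_rpow {c q : ℝ} (hc : 0 < c) (hq : 1 < q) :
    SuperpolynomialDecay atTop Real.exp fun x => Real.exp (-c * x ^ q) := fun n =>
  (Real.tendsto_exp_atBot.comp (tendsto_mul_sub_mul_rpow_atTop_atBot n hc hq)).congr fun x => by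
    rw [Function.comp_apply, ← Real.exp_nat_mul, ← Real.exp_add, neg_mul, sub_eq_add_neg]

theorem eqOn_zero_on_right_half_plane_of_norm_le_exp_neg_rpow {E : Type*} [NormedAddCommGroup E]
    [NormedSpace ℂ E] {g : ℂ → E} (hd : DiffContOnCl ℂ g {z | 0 < z.re}) {C c q : ℝ}
    (hc : 0 < c) (hq : 1 < q) (hg : ∀ w : ℂ, 0 ≤ w.re → ‖g w‖ ≤ C * Real.exp (-c * ‖w‖ ^ q)) :
    EqOn g 0 {z | 0 ≤ z.re} := by
  have hC : 0 ≤ C := by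
    simpa [Real.zero_rpow (zero_lt_one.trans hq).ne'] using
      (norm_nonneg _).trans (hg 0 le_rfl)
  have hbdd : ∀ w : ℂ, 0 ≤ w.re → ‖g w‖ ≤ C := fun w hw =>
    (hg w hw).trans <| mul_le_of_le_one_right hC <| Real.exp_le_one_iff.2 <| by
      have := Real.rpow_nonneg (norm_nonneg w) q
      nlinarith
  refine PhragmenLindelof.eq_zero_on_right_half_plane_of_superexponential_decay hd
    ⟨1, one_lt_two, 0, ?_⟩ ?_ ⟨C, fun y => hbdd _ (by simp)⟩
  · refine IsBigO.of_bound C (eventually_inf_principal.2 (Eventually.of_forall fun w hw => ?_))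
    simpa using hbdd w (le_of_lt hw)
  · refine ((Real.superpolynomialDecay_exp_neg_mul_rpow hc hq).const_mul C)
      |>.trans_eventually_abs_le ?_
    filter_upwards [eventually_ge_atTop 0] with x hx
    have := hg x (by simpa using hx)
    rw [norm_real, Real.norm_of_nonneg hx] at this
    simpa [abs_of_nonneg hC] using this

lemma Complex.norm_le_norm_add_ofReal {w : ℂ} (hw : 0 ≤ w.re) {x : ℝ} (hx : 0 ≤ x) :
    ‖w‖ ≤ ‖w + x‖ := by
  rw [← sq_le_sq₀ (norm_nonneg _) (norm_nonneg _), Complex.sq_norm, Complex.sq_norm,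
    normSq_apply, normSq_apply]
  simp only [add_re, ofReal_re, add_im, ofReal_im, add_zero]
  nlinarith

lemma mapsTo_mul_I_sub_mul_log {a b q : ℝ} (hq : 0 < q) (hqπ : q * π ≤ b - a) :
    MapsTo (fun w : ℂ => ((a + b) / 2 : ℝ) * I - q * log w) {w | 1 < w.re}
      (Iio 0 ×ℂ Ioo a b) := by
  intro w (hw : 1 < w.re)
  have hlog : 0 < Real.log ‖w‖ := Real.log_pos (hw.trans_le (re_le_norm w))
  have harg := abs_lt.1 (abs_arg_lt_pi_div_two_iff.2 (Or.inl (zero_lt_one.trans hw)))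
  refine ⟨?_, ?_, ?_⟩ <;>
    simp only [mem_preimage, mem_Iio, sub_re, sub_im, mul_re, mul_im, ofReal_re, ofReal_im, I_re,
      I_im, log_re, log_im] <;>
    nlinarith

lemma exp_neg_re_mul_I_sub_mul_log (θ q : ℝ) {w : ℂ} (hw : w ≠ 0) :
    Real.exp (-(θ * I - q * log w).re) = ‖w‖ ^ q := by
  rw [Real.rpow_def_of_pos (norm_pos_iff.2 hw)]
  simp [log_re, mul_comm]

lemma frequently_eq_zero_of_eventually_comp_eq_zero {E : Type*} [NormedAddCommGroup E]
    {f : ℂ → E} {ψ : ℂ → ℂ} {w ψ' : ℂ} (hψ : HasDerivAt ψ ψ' w) (hψ' : ψ' ≠ 0)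
    (h : ∀ᶠ v in 𝓝 w, f (ψ v) = 0) : ∃ᶠ z in 𝓝[≠] ψ w, f z = 0 :=
  (hψ.tendsto_nhdsNE hψ').frequently (h.filter_mono nhdsWithin_le_nhds).frequently

theorem eqOn_zero_of_norm_le_exp_neg_mul_exp_neg_re {E : Type*} [NormedAddCommGroup E]
    [NormedSpace ℂ E] [CompleteSpace E] {a b : ℝ} (hab : π < b - a) {F : ℂ → E}
    (hF : DifferentiableOn ℂ F (Iio 0 ×ℂ Ioo a b)) {A B : ℝ} (hA : 0 ≤ A) (hB : 0 < B)
    (hbound : ∀ ζ ∈ Iio 0 ×ℂ Ioo a b, ‖F ζ‖ ≤ A * Real.exp (-B * Real.exp (-ζ.re))) :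
    EqOn F 0 (Iio 0 ×ℂ Ioo a b) := by
  set q : ℝ := (b - a) / π
  have hq : 1 < q := (one_lt_div Real.pi_pos).2 hab
  set ψ : ℂ → ℂ := fun w => ((a + b) / 2 : ℝ) * I - q * log (w + 2)
  have hψ : MapsTo ψ {w | -1 < w.re} (Iio 0 ×ℂ Ioo a b) :=
    (mapsTo_mul_I_sub_mul_log (zero_lt_one.trans hq) (div_mul_cancel₀ _ Real.pi_ne_zero).le).comp
      fun w (hw : -1 < w.re) => show 1 < (w + 2).re by simp; linarith
  have hψ' : ∀ w : ℂ, -1 < w.re → HasDerivAt ψ (-(q * (1 / (w + 2)))) w := fun w hw =>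
    ((((hasDerivAt_id w).add_const 2).clog
      (mem_slitPlane_iff.2 (Or.inl (by simp; linarith)))).const_mul _).const_sub _
  have hzero : EqOn (F ∘ ψ) 0 {w | 0 ≤ w.re} := by
    refine eqOn_zero_on_right_half_plane_of_norm_le_exp_neg_rpow (C := A) ?_ hB hq fun w hw => ?_
    · refine DifferentiableOn.diffContOnCl ?_
      rw [closure_setOfPred_lt_re]
      refine (hF.comp (fun w hw => ?_) hψ).mono fun w (hw : 0 ≤ w.re) => show -1 < w.re by linarith
      exact (hψ' w hw).differentiableAt.differentiableWithinAt
    · have hw2 : w + 2 ≠ 0 := ne_of_apply_ne re (show 0 < (w + 2).re by simp; linarith).ne'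
      calc ‖F (ψ w)‖ ≤ A * Real.exp (-B * ‖w + 2‖ ^ q) := by
            simpa only [ψ, exp_neg_re_mul_I_sub_mul_log _ _ hw2] using
              hbound _ (hψ (show -1 < w.re by linarith))
        _ ≤ A * Real.exp (-B * ‖w‖ ^ q) := by
            simp only [neg_mul]
            gcongr
            simpa using norm_le_norm_add_ofReal hw zero_le_two
  have hfreq : ∃ᶠ ζ in 𝓝[≠] ψ 1, F ζ = 0 := by
    refine frequently_eq_zero_of_eventually_comp_eq_zero (hψ' 1 (by norm_num))
      (neg_ne_zero.2 (mul_ne_zero (ofReal_ne_zero.2 (by linarith)) (by norm_num))) ?_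
    filter_upwards [(isOpen_lt continuous_const continuous_re).mem_nhds
      (by norm_num : (0 : ℝ) < (1 : ℂ).re)] with w hw
    exact hzero (le_of_lt hw)
  exact (hF.analyticOnNhd (isOpen_Iio.reProdIm isOpen_Ioo))
    |>.eqOn_zero_of_preconnected_of_frequently_eq_zero
      ((convex_Iio 0).reProdIm (convex_Ioo a b)).isPreconnected (hψ (by norm_num)) hfreq

/-- Watson's lemma: a holomorphic function on an open sector of the unit disc of opening
angle `> π` which satisfies `|f(z)| ≤ A exp(−B/|z|)` is identically zero. -/
theorem watson_lemma (a b : ℝ) (hab : Real.pi < b - a) (S : Set ℂ)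
    (hS : S = {z : ℂ | ∃ t φ : ℝ, 0 < t ∧ t < 1 ∧ φ ∈ Set.Ioo a b ∧
      z = (t : ℂ) * Complex.exp (φ * Complex.I)})
    (f : ℂ → ℂ) (hf : DifferentiableOn ℂ f S)
    (A B : ℝ) (hA : 0 < A) (hB : 0 < B)
    (hbound : ∀ z ∈ S, ‖f z‖ ≤ A * Real.exp (-B / ‖z‖)) :
    ∀ z ∈ S, f z = 0 := by
  rw [setOf_polar_mem_Ioo_eq_image_exp] at hS
  subst hS
  rintro _ ⟨ζ, hζ, rfl⟩
  refine eqOn_zero_of_norm_le_exp_neg_mul_exp_neg_re hab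
    (hf.comp differentiable_exp.differentiableOn (mapsTo_image _ _)) hA.le hB (fun ζ hζ => ?_) hζ
  simpa [norm_exp, div_eq_mul_inv, ← Real.exp_neg] using hbound _ (mem_image_of_mem _ hζ)
end

section
/- For every integer n ≥ 0 and every z ∈ ℂ such that j·z ≠ 1 for all integers j with 1 ≤ j ≤ n + 2, one has the identity 1 − Σ_{k=0}^{n} (−1)^k · k! · z^k / π_k(z) = (−1)^{n+1} · (n+1)! · z^{n+1} / π_n(z), where π_k(z) := Π_{j=1}^{k+1} (1 − j·z). -/
open Finset

/-!
With `R_k(z) := (-1)^k k! z^k / Π_{j=1}^{k} (1 - j z)` one has `R_0 = 1` and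
`R_k - R_{k+1} = (-1)^k k! z^k / π_k(z)`, because
`1 + (k+1) z / (1 - (k+1) z) = 1 / (1 - (k+1) z)`. The sum therefore telescopes to
`R_0 - R_{n+1}`, and the right-hand side is `R_{n+1}`.
-/

variable {K : Type*} [Field K]

def telescopingRemainder (z : K) (k : ℕ) : K :=
  (-1) ^ k * (Nat.factorial k : K) * z ^ k / ∏ j ∈ Icc 1 k, (1 - (j : K) * z)

@[simp]
lemma telescopingRemainder_zero (z : K) : telescopingRemainder z 0 = 1 := by
  simp [telescopingRemainder]

lemma telescopingRemainder_sub_succ (z : K) (k : ℕ) (hk : ((k + 1 : ℕ) : K) * z ≠ 1) :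
    telescopingRemainder z k - telescopingRemainder z (k + 1) =
      (-1) ^ k * (Nat.factorial k : K) * z ^ k / ∏ j ∈ Icc 1 (k + 1), (1 - (j : K) * z) := by
  have hlast : 1 - ((k + 1 : ℕ) : K) * z ≠ 0 := sub_ne_zero.2 hk.symm
  simp only [telescopingRemainder, prod_Icc_succ_top (Nat.le_add_left 1 k),
    Nat.factorial_succ]
  by_cases hprod : ∏ j ∈ Icc 1 k, (1 - (j : K) * z) = 0
  · simp [hprod] -- every quotient has denominator `0`
  · generalize ∏ j ∈ Icc 1 k, (1 - (j : K) * z) = P at hprod ⊢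
    rw [div_sub_div _ _ hprod (mul_ne_zero hprod hlast),
      div_eq_div_iff (mul_ne_zero hprod (mul_ne_zero hprod hlast)) (mul_ne_zero hprod hlast)]
    push_cast
    ring

/-- The telescoping identity
`1 − Σ_{k=0}^{n} (−1)^k k! z^k / π_k(z) = (−1)^{n+1} (n+1)! z^{n+1} / π_n(z)`,
where `π_k(z) = Π_{j=1}^{k+1} (1 − j z)`, valid as soon as `j·z ≠ 1` for `1 ≤ j ≤ n+2`. -/
theorem telescoping_identity (n : ℕ) (z : ℂ)
    (hz : ∀ j : ℕ, 1 ≤ j → j ≤ n + 2 → (j : ℂ) * z ≠ 1) :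
    1 - ∑ k ∈ Finset.range (n + 1),
        (-1) ^ k * (Nat.factorial k : ℂ) * z ^ k /
          (∏ j ∈ Finset.Icc 1 (k + 1), (1 - (j : ℂ) * z)) =
      (-1) ^ (n + 1) * (Nat.factorial (n + 1) : ℂ) * z ^ (n + 1) /
        (∏ j ∈ Finset.Icc 1 (n + 1), (1 - (j : ℂ) * z)) := by
  have hterm : ∀ k ∈ range (n + 1),
      telescopingRemainder z k - telescopingRemainder z (k + 1) =
        (-1) ^ k * (Nat.factorial k : ℂ) * z ^ k /
          ∏ j ∈ Icc 1 (k + 1), (1 - (j : ℂ) * z) := fun k hk =>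
    telescopingRemainder_sub_succ z k (hz (k + 1) (by omega) (by simp at hk; omega))
  rw [← sum_congr rfl hterm, sum_range_sub', telescopingRemainder_zero, sub_sub_cancel]
  rfl
end

section
/- In the ring ℂ[[z]] of formal power series, the family ((−1)^k · k! · z^k · π_k(z)^{−1})_{k≥0}, where π_k(z) := Π_{j=1}^{k+1}(1 − j·z) is invertible in ℂ[[z]] since its constant term is 1, is summable (the k-th term is divisible by z^k) and Σ_{k=0}^{∞} (−1)^k · k! · z^k · π_k(z)^{−1} = 1. -/
open PowerSeries

/-- `π_k(z) = Π_{j=1}^{k+1} (1 − j z)` as a formal power series over `ℂ`. -/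
noncomputable def piP (k : ℕ) : PowerSeries ℂ :=
  ∏ j ∈ Finset.Icc 1 (k + 1), (1 - PowerSeries.C (j : ℂ) * PowerSeries.X)

/-- The `k`-th term `(−1)^k k! z^k π_k(z)⁻¹` of the divergent expansion of `1`. -/
noncomputable def termP (k : ℕ) : PowerSeries ℂ :=
  PowerSeries.C ((-1) ^ k * (Nat.factorial k : ℂ)) * PowerSeries.X ^ k * (piP k)⁻¹

/-!
With `r_k := (−1)^k k! z^k / Π_{j=1}^{k} (1 − j z)` one has `r_0 = 1` and
`r_k − r_{k+1} = (−1)^k k! z^k / π_k(z)`, because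
`1/(1 − (k+1)z) − 1 = (k+1)z/(1 − (k+1)z)`.
The series therefore telescopes: its `n`-th partial sum is `1 − r_{n+1}`, and `z^{n+1} ∣ r_{n+1}`.
-/

namespace DivergentExpansion

variable (K : Type*) [Field K]

noncomputable def partialProd (k : ℕ) : K⟦X⟧ :=
  ∏ j ∈ Finset.Icc 1 k, (1 - C (j : K) * X)

noncomputable def remainder (k : ℕ) : K⟦X⟧ :=
  C ((-1) ^ k * (k.factorial : K)) * X ^ k * (partialProd K k)⁻¹

theorem constantCoeff_partialProd (k : ℕ) : constantCoeff (partialProd K k) = 1 := by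
  simp [partialProd]

theorem partialProd_succ (k : ℕ) :
    partialProd K (k + 1) = partialProd K k * (1 - C ((k : K) + 1) * X) := by
  rw [partialProd, partialProd, Finset.prod_Icc_succ_top (by omega)]
  push_cast
  rfl

theorem inv_partialProd_eq (k : ℕ) :
    (partialProd K k)⁻¹ = (1 - C ((k : K) + 1) * X) * (partialProd K (k + 1))⁻¹ := by
  rw [partialProd_succ, PowerSeries.mul_inv_rev, ← mul_assoc,
    PowerSeries.mul_inv_cancel _ (by simp), one_mul]

theorem remainder_zero : remainder K 0 = 1 := by
  simp [remainder, partialProd]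

theorem remainder_sub_remainder_succ (k : ℕ) :
    remainder K k - remainder K (k + 1) =
      C ((-1) ^ k * (k.factorial : K)) * X ^ k * (partialProd K (k + 1))⁻¹ := by
  rw [remainder, remainder, inv_partialProd_eq, Nat.factorial_succ]
  push_cast
  simp only [map_mul, map_add, map_neg, map_one, map_pow, map_natCast]
  ring

theorem X_pow_dvd_remainder (k : ℕ) : X ^ k ∣ remainder K k :=
  dvd_mul_of_dvd_left (dvd_mul_left _ _) _

end DivergentExpansion

open DivergentExpansion

theorem piP_eq_partialProd (k : ℕ) : piP k = partialProd ℂ (k + 1) := rfl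

theorem termP_eq_remainder_sub (k : ℕ) : termP k = remainder ℂ k - remainder ℂ (k + 1) := by
  rw [remainder_sub_remainder_succ, termP, piP_eq_partialProd]

theorem sum_range_termP (n : ℕ) :
    ∑ k ∈ Finset.range n, termP k = 1 - remainder ℂ n := by
  simp only [termP_eq_remainder_sub, Finset.sum_range_sub', remainder_zero]

/-- In `ℂ[[z]]`: each `π_k` has constant term `1` hence is invertible, the family
`((−1)^k k! z^k π_k⁻¹)_k` is summable (the `k`-th term is divisible by `z^k`), and its sum
is the constant series `1` (coefficientwise: for each `n` only the terms with `k ≤ n`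
contribute to the `n`-th coefficient, and they sum to the `n`-th coefficient of `1`). -/
theorem formal_expansion_of_one :
    (∀ k : ℕ, PowerSeries.constantCoeff (piP k) = 1 ∧ IsUnit (piP k)) ∧
    (∀ k : ℕ, (PowerSeries.X : PowerSeries ℂ) ^ k ∣ termP k) ∧
    (∀ n : ℕ, ∑ k ∈ Finset.range (n + 1), (PowerSeries.coeff n) (termP k) =
      (PowerSeries.coeff n) (1 : PowerSeries ℂ)) := by
  have hconst (k : ℕ) : constantCoeff (piP k) = 1 := constantCoeff_partialProd ℂ (k + 1)
  refine ⟨fun k => ⟨hconst k, ?_⟩, fun k => ?_, fun n => ?_⟩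
  · rw [isUnit_iff_constantCoeff, hconst]
    exact isUnit_one
  · exact dvd_mul_of_dvd_left (dvd_mul_left _ _) _
  · have hrem : coeff n (remainder ℂ (n + 1)) = 0 :=
      X_pow_dvd_iff.mp (X_pow_dvd_remainder ℂ _) n n.lt_succ_self
    rw [← map_sum, sum_range_termP, map_sub, hrem, sub_zero]
end

section
/- Let 0 < t ≤ 1 and 0 ≤ s < t, let f be holomorphic and bounded on the open disc D(0,t), and let θ be the operator (θg)(x) := x·g'(x). Then for every integer j ≥ 1, sup_{|x| ≤ s} |(θ^j f)(x)| ≤ (j/(t − s))^j · sup_{|x| < t} |f(x)|, where θ^j denotes the j-fold iterate of θ. -/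
open Metric Set

/-- The Euler operator `θ = x d/dx`. -/
noncomputable def thetaOp (g : ℂ → ℂ) : ℂ → ℂ := fun x => x * deriv g x

/-- The supremum of `|f|` over a set `S`. -/
noncomputable def supNorm (f : ℂ → ℂ) (S : Set ℂ) : ℝ :=
  sSup ((fun z => ‖f z‖) '' S)

/-!
Cut the annulus `s ≤ |x| < t` into `j` layers of width `δ = (t - s)/j`. Each application of `θ`
costs one layer: by Cauchy's estimate on a disc of radius `δ`, a bound `B` for `g` on the disc
`|x| < r` gives the bound `B/δ` for `θ g = x g'` on `|x| ≤ r - δ`, since `|x| ≤ 1` there.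
After `j` steps, `θ^j f` is bounded by `sup |f| / δ^j` on `|x| ≤ s`.
-/

theorem Complex.norm_deriv_le_of_forall_mem_ball_norm_le {E : Type*} [NormedAddCommGroup E]
    [NormedSpace ℂ E] {c : ℂ} {R C : ℝ} {f : ℂ → E} (hR : 0 < R)
    (hd : DifferentiableOn ℂ f (ball c R)) (hC : ∀ z ∈ ball c R, ‖f z‖ ≤ C) :
    ‖deriv f c‖ ≤ C / R := by
  have hsmaller : ∀ r ∈ Ioo 0 R, ‖deriv f c‖ ≤ C / r := fun r ⟨hr0, hrR⟩ =>
    norm_deriv_le_of_forall_mem_sphere_norm_le hr0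
      (hd.diffContOnCl_ball (closedBall_subset_ball hrR))
      fun z hz => hC z (sphere_subset_closedBall.trans (closedBall_subset_ball hrR) hz)
  have hlim : Filter.Tendsto (fun r => C / r) (nhdsWithin R (Iio R)) (nhds (C / R)) :=
    (tendsto_const_nhds.div Filter.tendsto_id hR.ne').mono_left nhdsWithin_le_nhds
  exact ge_of_tendsto hlim (Filter.eventually_of_mem (Ioo_mem_nhdsLT hR) hsmaller)

theorem differentiableOn_thetaOp {U : Set ℂ} {g : ℂ → ℂ} (hg : DifferentiableOn ℂ g U)
    (hU : IsOpen U) : DifferentiableOn ℂ (thetaOp g) U :=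
  differentiableOn_id.mul (hg.deriv hU)

theorem differentiableOn_thetaOp_iterate {U : Set ℂ} {g : ℂ → ℂ} (hg : DifferentiableOn ℂ g U)
    (hU : IsOpen U) (k : ℕ) : DifferentiableOn ℂ (thetaOp^[k] g) U := by
  induction k with
  | zero => exact hg
  | succ k ih =>
    rw [Function.iterate_succ_apply']
    exact differentiableOn_thetaOp ih hU

theorem norm_thetaOp_le {g : ℂ → ℂ} {z : ℂ} {δ C : ℝ} (hδ : 0 < δ)
    (hg : DifferentiableOn ℂ g (ball z δ)) (hC : ∀ w ∈ ball z δ, ‖g w‖ ≤ C) (hz : ‖z‖ ≤ 1) :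
    ‖thetaOp g z‖ ≤ C / δ :=
  calc ‖thetaOp g z‖ = ‖z‖ * ‖deriv g z‖ := norm_mul _ _
    _ ≤ ‖deriv g z‖ := mul_le_of_le_one_left (norm_nonneg _) hz
    _ ≤ C / δ := Complex.norm_deriv_le_of_forall_mem_ball_norm_le hδ hg hC

section Layers

variable {f : ℂ → ℂ} {t δ M : ℝ} (hf : DifferentiableOn ℂ f (ball 0 t)) (ht1 : t ≤ 1)
  (hM : ∀ z ∈ ball 0 t, ‖f z‖ ≤ M) (hδ : 0 < δ)
include hf ht1 hδ

theorem norm_thetaOp_iterate_succ_le {k : ℕ}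
    (hk : ∀ w ∈ ball (0 : ℂ) (t - k * δ), ‖thetaOp^[k] f w‖ ≤ M / δ ^ k)
    {z : ℂ} (hz : ‖z‖ + (k + 1) * δ ≤ t) :
    ‖thetaOp^[k + 1] f z‖ ≤ M / δ ^ (k + 1) := by
  have hsub : ball z δ ⊆ ball 0 (t - k * δ) :=
    ball_subset_ball' (by rw [dist_zero_right]; linarith)
  have hdiff : DifferentiableOn ℂ (thetaOp^[k] f) (ball z δ) :=
    (differentiableOn_thetaOp_iterate hf isOpen_ball k).mono (hsub.trans (ball_subset_ball (by nlinarith)))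
  rw [Function.iterate_succ_apply', pow_succ, ← div_div]
  exact norm_thetaOp_le hδ hdiff (fun w hw => hk w (hsub hw)) (by nlinarith [norm_nonneg z])

include hM in
theorem norm_thetaOp_iterate_le (k : ℕ) :
    ∀ z ∈ ball (0 : ℂ) (t - k * δ), ‖thetaOp^[k] f z‖ ≤ M / δ ^ k := by
  induction k with
  | zero => simpa using hM
  | succ k ih =>
    intro z hz
    rw [mem_ball_zero_iff] at hz
    exact norm_thetaOp_iterate_succ_le hf ht1 hδ ih (by push_cast at hz; linarith)

end Layers

theorem euler_operator_estimate_general (t s : ℝ) (ht1 : t ≤ 1)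
    (hst : s < t) (f : ℂ → ℂ) (hf : DifferentiableOn ℂ f (Metric.ball 0 t))
    (hbdd : BddAbove ((fun z => ‖f z‖) '' Metric.ball (0 : ℂ) t)) :
    ∀ j : ℕ, 1 ≤ j → ∀ x : ℂ, ‖x‖ ≤ s →
      ‖thetaOp^[j] f x‖ ≤
        ((j : ℝ) / (t - s)) ^ j * supNorm f (Metric.ball 0 t) := by
  rintro j hj x hx
  obtain ⟨m, rfl⟩ : ∃ m, j = m + 1 := ⟨j - 1, by omega⟩
  set M := supNorm f (ball 0 t)
  set δ := (t - s) / (m + 1 : ℕ)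
  have hM : ∀ z ∈ ball (0 : ℂ) t, ‖f z‖ ≤ M := fun z hz => le_csSup hbdd ⟨z, hz, rfl⟩
  have hδ : 0 < δ := div_pos (by linarith) (by positivity)
  have hwidth : ((m : ℝ) + 1) * δ = t - s := by
    simp only [δ]; push_cast; field_simp
  calc ‖thetaOp^[m + 1] f x‖ ≤ M / δ ^ (m + 1) :=
        norm_thetaOp_iterate_succ_le hf ht1 hδ (norm_thetaOp_iterate_le hf ht1 hM hδ m)
          (by linarith)
    _ = (((m + 1 : ℕ) : ℝ) / (t - s)) ^ (m + 1) * M := by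
        simp only [δ, div_pow, div_div_eq_mul_div]; ring

/-- For `f` bounded holomorphic on `D(0,t)` with `0 < t ≤ 1` and `0 ≤ s < t`, the iterates of
the Euler operator satisfy `sup_{|x| ≤ s} |θ^j f(x)| ≤ (j/(t−s))^j · sup_{|x| < t} |f(x)|`. -/
theorem euler_operator_estimate (t s : ℝ) (ht0 : 0 < t) (ht1 : t ≤ 1) (hs0 : 0 ≤ s)
    (hst : s < t) (f : ℂ → ℂ) (hf : DifferentiableOn ℂ f (Metric.ball 0 t))
    (hbdd : BddAbove ((fun z => ‖f z‖) '' Metric.ball (0 : ℂ) t)) :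
    ∀ j : ℕ, 1 ≤ j → ∀ x : ℂ, ‖x‖ ≤ s →
      ‖thetaOp^[j] f x‖ ≤
        ((j : ℝ) / (t - s)) ^ j * supNorm f (Metric.ball 0 t) :=
  euler_operator_estimate_general t s ht1 hst f hf hbdd
end

section
/- Let x ∈ ℂ with |x| < 1 and let j ≥ 1 be an integer. Then the series Σ_{n=1}^{∞} n^j x^n converges absolutely, and for every real t with |x| < t < 1 one has |Σ_{n=1}^{∞} n^j x^n| ≤ (j/(t − |x|))^j · 1/(1 − t). In particular, for each fixed x with |x| < 1 there is a constant C > 0 with |Σ_{n=1}^{∞} n^j x^n| ≤ C^{j+1} · j^j for all j ≥ 1. -/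
/-!
Write `a = ‖x‖` and `c = t - a`. From `y ^ j ≤ j! e^y ≤ j ^ j e^y` one gets
`k ^ j ≤ (j / c) ^ j e^{c k}`, and `a e^c ≤ t` for `a ≤ t ≤ 1`, so every term satisfies
`k ^ j a ^ k ≤ (j / c) ^ j t ^ k`: the series is dominated by a geometric series of ratio `t`.
Taking `t = (1 + a) / 2` gives the Gevrey bound with `C = 2 / (1 - a)`.
-/

open Real

lemma pow_le_div_pow_mul_exp (j : ℕ) {y c : ℝ} (hy : 0 ≤ y) (hc : 0 < c) :
    y ^ j ≤ (j / c) ^ j * exp (c * y) := by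
  have hexp : (c * y) ^ j ≤ (j : ℝ) ^ j * exp (c * y) := by
    have hfac : (j.factorial : ℝ) ≤ (j : ℝ) ^ j := by exact_mod_cast Nat.factorial_le_pow j
    have := pow_div_factorial_le_exp (c * y) (by positivity) j
    rw [div_le_iff₀ (by positivity)] at this
    exact this.trans (by rw [mul_comm]; gcongr)
  rw [div_pow, div_mul_eq_mul_div, le_div_iff₀ (by positivity), ← mul_pow, mul_comm y]
  exact hexp

lemma mul_exp_sub_le {a t : ℝ} (ht₀ : 0 ≤ t) (hat : a ≤ t) (ht₁ : t ≤ 1) :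
    a * exp (t - a) ≤ t := by
  -- `a ≤ t (1 + (a - t)) ≤ t e^{a - t}`, the first step being `(t - a)(1 - t) ≥ 0`.
  have h : a ≤ t * exp (a - t) := by
    nlinarith [add_one_le_exp (a - t), mul_nonneg (sub_nonneg.2 hat) (sub_nonneg.2 ht₁)]
  calc a * exp (t - a) ≤ t * exp (a - t) * exp (t - a) := by gcongr
    _ = t := by rw [mul_assoc, ← exp_add]; simp

lemma natCast_pow_mul_pow_le (j k : ℕ) {a t : ℝ} (ha : 0 ≤ a) (hat : a < t) (ht : t ≤ 1) :
    (k : ℝ) ^ j * a ^ k ≤ (j / (t - a)) ^ j * t ^ k :=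
  calc (k : ℝ) ^ j * a ^ k ≤ (j / (t - a)) ^ j * exp ((t - a) * k) * a ^ k := by
        gcongr; exact pow_le_div_pow_mul_exp j k.cast_nonneg (sub_pos.2 hat)
    _ = (j / (t - a)) ^ j * (a * exp (t - a)) ^ k := by
        rw [mul_comm (t - a), exp_nat_mul, mul_pow]; ring
    _ ≤ (j / (t - a)) ^ j * t ^ k := by
        gcongr
        exact mul_exp_sub_le (ha.trans hat.le) hat.le ht

section RCLike

variable {𝕜 : Type*} [RCLike 𝕜]

lemma norm_succ_pow_mul_pow_succ_le (j n : ℕ) {x : 𝕜} {t : ℝ} (hxt : ‖x‖ < t) (ht : t ≤ 1) :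
    ‖((n : 𝕜) + 1) ^ j * x ^ (n + 1)‖ ≤ (j / (t - ‖x‖)) ^ j * t ^ n := by
  have hterm := natCast_pow_mul_pow_le j (n + 1) (norm_nonneg x) hxt ht
  have hnorm : ‖((n : 𝕜) + 1) ^ j * x ^ (n + 1)‖ = ((n + 1 : ℕ) : ℝ) ^ j * ‖x‖ ^ (n + 1) := by
    rw [norm_mul, norm_pow, norm_pow, ← RCLike.norm_natCast (K := 𝕜)]
    push_cast
    rfl
  have ht₀ : 0 ≤ t := (norm_nonneg x).trans hxt.le
  rw [hnorm]
  refine hterm.trans (mul_le_mul_of_nonneg_left ?_ ?_)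
  · exact pow_le_pow_of_le_one ht₀ ht n.le_succ
  · exact pow_nonneg (div_nonneg j.cast_nonneg (sub_pos.2 hxt).le) j

lemma hasSum_bound_geometric (j : ℕ) {x : 𝕜} {t : ℝ} (hxt : ‖x‖ < t) (ht : t < 1) :
    HasSum (fun n : ℕ => (j / (t - ‖x‖)) ^ j * t ^ n) ((j / (t - ‖x‖)) ^ j * (1 - t)⁻¹) :=
  (hasSum_geometric_of_lt_one ((norm_nonneg x).trans hxt.le) ht).mul_left _

lemma summable_norm_succ_pow_mul_pow_succ (j : ℕ) {x : 𝕜} (hx : ‖x‖ < 1) :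
    Summable fun n : ℕ => ‖((n : 𝕜) + 1) ^ j * x ^ (n + 1)‖ := by
  obtain ⟨t, hxt, ht⟩ := exists_between hx
  exact (hasSum_bound_geometric j hxt ht).summable.of_nonneg_of_le (fun _ => norm_nonneg _)
    fun n => norm_succ_pow_mul_pow_succ_le j n hxt ht.le

lemma norm_tsum_succ_pow_mul_pow_succ_le (j : ℕ) {x : 𝕜} {t : ℝ} (hxt : ‖x‖ < t) (ht : t < 1) :
    ‖∑' n : ℕ, ((n : 𝕜) + 1) ^ j * x ^ (n + 1)‖ ≤ (j / (t - ‖x‖)) ^ j * (1 - t)⁻¹ :=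
  tsum_of_norm_bounded (hasSum_bound_geometric j hxt ht)
    fun n => norm_succ_pow_mul_pow_succ_le j n hxt ht.le

end RCLike

/-- For `|x| < 1` and `j ≥ 1` the series `Σ_{n≥1} n^j x^n` converges absolutely, with
`|Σ_{n≥1} n^j x^n| ≤ (j/(t−|x|))^j · 1/(1−t)` for every `|x| < t < 1`; in particular for
each fixed `x` there is `C > 0` with `|Σ_{n≥1} n^j x^n| ≤ C^{j+1} j^j` for all `j ≥ 1`. -/
theorem poincare_coefficients_gevrey (x : ℂ) (hx : ‖x‖ < 1) :
    (∀ j : ℕ, 1 ≤ j →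
      Summable fun n : ℕ => ‖((((n : ℂ) + 1)) ^ j * x ^ (n + 1))‖) ∧
    (∀ j : ℕ, 1 ≤ j → ∀ t : ℝ, ‖x‖ < t → t < 1 →
      ‖(∑' n : ℕ, ((n : ℂ) + 1) ^ j * x ^ (n + 1))‖ ≤
        ((j : ℝ) / (t - ‖x‖)) ^ j * (1 / (1 - t))) ∧
    (∃ C : ℝ, 0 < C ∧ ∀ j : ℕ, 1 ≤ j →
      ‖(∑' n : ℕ, ((n : ℂ) + 1) ^ j * x ^ (n + 1))‖ ≤
        C ^ (j + 1) * (j : ℝ) ^ j) := by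
  have hbound (j : ℕ) (t : ℝ) (hxt : ‖x‖ < t) (ht : t < 1) :
      ‖∑' n : ℕ, ((n : ℂ) + 1) ^ j * x ^ (n + 1)‖ ≤ ((j : ℝ) / (t - ‖x‖)) ^ j * (1 / (1 - t)) :=
    one_div (1 - t) ▸ norm_tsum_succ_pow_mul_pow_succ_le j hxt ht
  refine ⟨fun j _ => summable_norm_succ_pow_mul_pow_succ j hx, fun j _ => hbound j,
    2 / (1 - ‖x‖), div_pos two_pos (sub_pos.2 hx), fun j _ => ?_⟩
  have hx' : 1 - ‖x‖ ≠ 0 := (sub_pos.2 hx).ne'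
  convert hbound j ((1 + ‖x‖) / 2) (by linarith) (by linarith) using 1
  field_simp
  ring
end
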